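/- Derivative of the total enthalpy along the 3-Lax curve at the base pressure: let γ > 1 and let (ρ_R, q_R, E_R) be a gas state with ρ_R > 0, velocity u_R = q_R/ρ_R, pressure p_R = (γ−1)(E_R − q_R²/(2ρ_R)) > 0 and sound speed c_R = √(γp_R/ρ_R). With ψ and φ the Lax-curve parametrisation functions based at (ρ_R, p_R), the total-enthalpy function H(σ) := (γ/(γ−1))·σ/φ(σ) + (u_R + ψ(σ))²/2 has derivative H′(p_R) = (u_R + c_R)/(c_R·ρ_R) at σ = p_R. -/

import Mathlib

/-!
Both `φ` and `ψ` are glued at `p_R` from a rarefaction branch (`σ ≤ p_R`) and a Hugoniot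
branch (`σ > p_R`). The two branches agree to first order there: both give
`φ'(p_R) = ρ_R/(γ p_R) = 1/c_R²` and `ψ'(p_R) = 1/(ρ_R c_R)`, so `H` is differentiable at `p_R`,
and the quotient and chain rules, with `φ(p_R) = ρ_R`, `ψ(p_R) = 0`, give
`H'(p_R) = 1/ρ_R + u_R/(ρ_R c_R)`.
-/

/-- The velocity function `ψ` of the Lax-curve parametrisation. -/
noncomputable def laxPsi (γ ρ p : ℝ) (σ : ℝ) : ℝ :=
  if σ ≤ p then
    (2 * Real.sqrt (γ * p / ρ) / (γ - 1)) * ((σ / p) ^ ((γ - 1) / (2 * γ)) - 1)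
  else
    (σ - p) * Real.sqrt ((1 - (γ - 1) / (γ + 1)) / (ρ * (σ + ((γ - 1) / (γ + 1)) * p)))

/-- The density function `φ` of the Lax-curve parametrisation. -/
noncomputable def laxPhi (γ ρ p : ℝ) (σ : ℝ) : ℝ :=
  if σ ≤ p then
    ρ * (σ / p) ^ (1 / γ)
  else
    ρ * (σ + ((γ - 1) / (γ + 1)) * p) / (((γ - 1) / (γ + 1)) * σ + p)

theorem HasDerivAt.ite_le {f g : ℝ → ℝ} {a f' : ℝ} (hf : HasDerivAt f f' a)
    (hg : HasDerivAt g f' a) (hfg : f a = g a) :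
    HasDerivAt (fun x => if x ≤ a then f x else g x) f' a := by
  have hleft : HasDerivWithinAt (fun x => if x ≤ a then f x else g x) f' (Set.Iic a) a :=
    hf.hasDerivWithinAt.congr_of_mem (fun x hx => if_pos hx) Set.self_mem_Iic
  have hright : HasDerivWithinAt (fun x => if x ≤ a then f x else g x) f' (Set.Ici a) a := by
    refine hg.hasDerivWithinAt.congr_of_mem (fun x hx => ?_) Set.self_mem_Ici
    rcases (Set.mem_Ici.mp hx).eq_or_lt with rfl | hlt
    · simp [hfg]
    · simp [not_le.mpr hlt]
  simpa [Set.Iic_union_Ici] using hleft.union hright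

theorem hasDerivAt_div_self_rpow {p : ℝ} (hp : p ≠ 0) (a : ℝ) :
    HasDerivAt (fun σ => (σ / p) ^ a) (a / p) p := by
  refine (((hasDerivAt_id p).div_const p).rpow_const (p := a) (by simp [hp])).congr_deriv ?_
  simp [hp, div_eq_mul_inv, mul_comm]

theorem hasDerivAt_sub_mul {f : ℝ → ℝ} {a f' : ℝ} (hf : HasDerivAt f f' a) :
    HasDerivAt (fun x => (x - a) * f x) (f a) a := by
  refine (((hasDerivAt_id a).sub_const a).mul hf).congr_deriv ?_
  simp

theorem hasDerivAt_mul_add_div_mul_add (ρ : ℝ) {m p : ℝ} (hp : 0 < p) (hm : 0 < 1 + m) :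
    HasDerivAt (fun σ => ρ * (σ + m * p) / (m * σ + p)) (ρ * ((1 - m) / (1 + m)) / p) p := by
  have hnum : HasDerivAt (fun σ => ρ * (σ + m * p)) ρ p := by
    simpa using ((hasDerivAt_id p).add_const (m * p)).const_mul ρ
  have hden : HasDerivAt (fun σ => m * σ + p) m p := by
    simpa using ((hasDerivAt_id p).const_mul m).add_const p
  have hmp : m * p + p = (1 + m) * p := by ring
  refine (hnum.div hden (by rw [hmp]; positivity)).congr_deriv ?_
  rw [hmp]
  field_simp

theorem one_sub_div_one_add_div (γ : ℝ) (hγ : 0 < γ) :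
    (1 - (γ - 1) / (γ + 1)) / (1 + (γ - 1) / (γ + 1)) = 1 / γ := by
  have : γ + 1 ≠ 0 := by positivity
  field_simp [hγ.ne']
  ring

section LaxCurve

variable {γ ρ p : ℝ}

theorem laxPhi_self (hp : p ≠ 0) : laxPhi γ ρ p p = ρ := by
  simp [laxPhi, hp]

theorem laxPsi_self (hp : p ≠ 0) : laxPsi γ ρ p p = 0 := by
  simp [laxPsi, hp]

theorem hasDerivAt_laxPhi (hγ : 0 < γ) (hp : 0 < p) :
    HasDerivAt (laxPhi γ ρ p) (ρ / (γ * p)) p := by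
  have hkey := one_sub_div_one_add_div γ hγ
  have hm : 0 < 1 + (γ - 1) / (γ + 1) := by
    have : -1 < (γ - 1) / (γ + 1) := by rw [lt_div_iff₀ (by linarith)]; linarith
    linarith
  unfold laxPhi
  generalize (γ - 1) / (γ + 1) = m at hkey hm ⊢
  have hleft : HasDerivAt (fun σ => ρ * (σ / p) ^ (1 / γ)) (ρ / (γ * p)) p := by
    refine ((hasDerivAt_div_self_rpow hp.ne' (1 / γ)).const_mul ρ).congr_deriv ?_
    field_simp
  have hright := hasDerivAt_mul_add_div_mul_add ρ hp hm
  rw [hkey] at hright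
  refine hleft.ite_le (hright.congr_deriv (by ring)) ?_
  have hden : p + m * p ≠ 0 := by nlinarith
  simp only [div_self hp.ne', Real.one_rpow, mul_one]
  rw [add_comm (m * p), mul_div_cancel_right₀ _ hden]

theorem hasDerivAt_laxPsi (hγ : 1 < γ) (hρ : 0 < ρ) (hp : 0 < p) :
    HasDerivAt (laxPsi γ ρ p) (1 / (ρ * √(γ * p / ρ))) p := by
  have hγ0 : 0 < γ := by linarith
  have hkey := one_sub_div_one_add_div γ hγ0
  have hm : 0 ≤ (γ - 1) / (γ + 1) := div_nonneg (by linarith) (by linarith)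
  have hm1 : (γ - 1) / (γ + 1) < 1 := (div_lt_one (by linarith)).mpr (by linarith)
  unfold laxPsi
  generalize (γ - 1) / (γ + 1) = m at hkey hm hm1 ⊢
  generalize hc : √(γ * p / ρ) = c
  have hc0 : 0 < c := hc ▸ Real.sqrt_pos.mpr (by positivity)
  have hc2 : c ^ 2 * ρ = γ * p := by
    rw [← hc, Real.sq_sqrt (by positivity)]
    field_simp
  have hleft : HasDerivAt (fun σ => 2 * c / (γ - 1) * ((σ / p) ^ ((γ - 1) / (2 * γ)) - 1))
      (1 / (ρ * c)) p := by
    refine (((hasDerivAt_div_self_rpow hp.ne' _).sub_const 1).const_mul _).congr_deriv ?_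
    field_simp [(by linarith : γ - 1 ≠ 0)]
    linear_combination hc2
  have harg : 0 < (1 - m) / (ρ * (p + m * p)) := div_pos (by linarith) (by positivity)
  have hsqrt : DifferentiableAt ℝ (fun σ => √((1 - m) / (ρ * (σ + m * p)))) p := by
    fun_prop (disch := first | positivity | exact harg.ne')
  have hval : √((1 - m) / (ρ * (p + m * p))) = 1 / (ρ * c) := by
    rw [Real.sqrt_eq_iff_eq_sq harg.le (by positivity)]
    have hkey' : γ * (1 - m) = 1 + m := by
      field_simp at hkey
      linear_combination hkey
    field_simp
    linear_combination (1 - m) * hc2 + p * hkey'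
  exact hleft.ite_le ((hasDerivAt_sub_mul hsqrt.hasDerivAt).congr_deriv hval) (by simp [hp.ne'])

end LaxCurve

theorem lax3_enthalpy_deriv_at_base_general
    (γ : ℝ) (hγ : 1 < γ)
    (ρR uR pR cR : ℝ) (hρ : 0 < ρR)
    (hp : 0 < pR)
    (hcR : cR = Real.sqrt (γ * pR / ρR)) :
    HasDerivAt
      (fun σ : ℝ => (γ / (γ - 1)) * σ / laxPhi γ ρR pR σ + (uR + laxPsi γ ρR pR σ) ^ 2 / 2)
      ((uR + cR) / (cR * ρR)) pR := by
  have hc : 0 < cR := hcR ▸ Real.sqrt_pos.mpr (by positivity)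
  have hφ := hasDerivAt_laxPhi (ρ := ρR) (by linarith : 0 < γ) hp
  have hψ := hasDerivAt_laxPsi hγ hρ hp
  rw [← hcR] at hψ
  have hφ0 : laxPhi γ ρR pR pR ≠ 0 := by rw [laxPhi_self hp.ne']; exact hρ.ne'
  have hH := (((hasDerivAt_id pR).const_mul (γ / (γ - 1))).div hφ hφ0).add
    (((hψ.const_add uR).pow 2).div_const 2)
  refine hH.congr_deriv ?_
  rw [laxPhi_self hp.ne', laxPsi_self hp.ne', id_eq]
  field_simp [(by linarith : γ - 1 ≠ 0), (by linarith : γ ≠ 0)]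
  ring

/-- Derivative of the total enthalpy `H(σ) = (γ/(γ−1))·σ/φ(σ) + (u_R + ψ(σ))²/2` along
the 3-Lax curve at the base pressure: `H′(p_R) = (u_R + c_R)/(c_R·ρ_R)`. -/
theorem lax3_enthalpy_deriv_at_base
    (γ : ℝ) (hγ : 1 < γ)
    (ρR qR ER uR pR cR : ℝ) (hρ : 0 < ρR)
    (huR : uR = qR / ρR)
    (hpR : pR = (γ - 1) * (ER - qR ^ 2 / (2 * ρR))) (hp : 0 < pR)
    (hcR : cR = Real.sqrt (γ * pR / ρR)) :
    HasDerivAt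
      (fun σ : ℝ => (γ / (γ - 1)) * σ / laxPhi γ ρR pR σ + (uR + laxPsi γ ρR pR σ) ^ 2 / 2)
      ((uR + cR) / (cR * ρR)) pR :=
  lax3_enthalpy_deriv_at_base_general γ hγ ρR uR pR cR hρ hp hcR
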